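/- Let d ≥ 2, 1 < p < ∞, let Ω ⊆ ℝ^d be an exterior domain, and let r₀ > 0 be such that Ωᶜ ⊆ B_{r₀}. Let v be a weak solution of the p-Laplace equation on Ω with homogeneous Neumann boundary conditions. Then for every b ∈ ℝ and every r ≥ r₀ the Caccioppoli-type inequality ∫_{Ω∩B_{2r}} |∇v|^p φ_r^p dx ≤ (C₀/r) · (∫_{(Ω∩B_{2r})\B_r} |∇v|^p φ_r^p dx)^{(p-1)/p} · (∫_{(Ω∩B_{2r})\B_r} |v-b|^p dx)^{1/p} holds, where C₀ := p · sup_{x∈ℝ^d} |∇φ(x)|. (Proposition 2, Neumann case.) -/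

import Mathlib

open MeasureTheory Filter Metric
open scoped RealInnerProductSpace

/-- An exterior domain of `ℝ^d`: a connected open set whose complement is
compact and nonempty. -/
def IsExteriorDomain {d : ℕ} (Ω : Set (EuclideanSpace ℝ (Fin d))) : Prop :=
  IsOpen Ω ∧ IsConnected Ω ∧ IsCompact Ωᶜ ∧ Ωᶜ.Nonempty

/-- A weak solution of the `p`-Laplace equation on `Ω` with homogeneous
Neumann boundary conditions. -/
def IsWeakNeumannSolution {d : ℕ} (p : ℝ) (Ω : Set (EuclideanSpace ℝ (Fin d)))
    (v : EuclideanSpace ℝ (Fin d) → ℝ) : Prop :=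
  ContDiffOn ℝ 1 v Ω ∧
  (∀ r > (0 : ℝ),
    IntegrableOn (fun x => |v x| ^ p + ‖gradient v x‖ ^ p) (Ω ∩ ball 0 r)) ∧
  ∀ ψ : EuclideanSpace ℝ (Fin d) → ℝ, ContDiffOn ℝ 1 ψ Ω →
    Bornology.IsBounded (Function.support ψ) →
    IntegrableOn (fun x => |ψ x| ^ p + ‖gradient ψ x‖ ^ p) Ω →
    ∫ x in Ω, ‖gradient v x‖ ^ (p - 2) * ⟪gradient v x, gradient ψ x⟫ = 0

-- aux 1: continuity of g ↦ ‖g‖^(p-2) • g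
lemma cacc_aux_cont {F : Type*} [NormedAddCommGroup F] [NormedSpace ℝ F] {p : ℝ} (hp : 1 < p) :
    Continuous (fun g : F => ‖g‖ ^ (p - 2) • g) := by
  rw [continuous_iff_continuousAt]
  intro g
  by_cases hg : g = 0
  · subst hg
    have h0 : ‖(0 : F)‖ ^ (p - 2) • (0 : F) = 0 := smul_zero _
    rw [ContinuousAt, h0]
    rw [tendsto_zero_iff_norm_tendsto_zero]
    have hb : ∀ h : F, ‖‖h‖ ^ (p - 2) • h‖ ≤ ‖h‖ ^ (p - 1) := by
      intro h
      rw [norm_smul, Real.norm_eq_abs, abs_of_nonneg (Real.rpow_nonneg (norm_nonneg _) _)]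
      rcases eq_or_lt_of_le (norm_nonneg h) with h0 | h0
      · rw [← h0]
        simp [Real.zero_rpow (by linarith : p - 1 ≠ 0)]
      · rw [show ‖h‖ ^ (p - 2) * ‖h‖ = ‖h‖ ^ (p - 2) * ‖h‖ ^ (1 : ℝ) by rw [Real.rpow_one],
          ← Real.rpow_add h0]
        norm_num [show p - 2 + 1 = p - 1 by ring]
    have hlim : Tendsto (fun h : F => ‖h‖ ^ (p - 1)) (nhds 0) (nhds 0) := by
      have : ContinuousAt (fun h : F => ‖h‖ ^ (p - 1)) 0 :=
        continuous_norm.continuousAt.rpow_const (Or.inr (by linarith))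
      simpa [ContinuousAt, Real.zero_rpow (by linarith : p - 1 ≠ 0)] using this
    exact squeeze_zero (fun h => norm_nonneg _) hb hlim
  · exact (continuous_norm.continuousAt.rpow_const
      (Or.inl (norm_ne_zero_iff.2 hg))).smul continuousAt_id

-- aux 2: (a+b)^p ≤ 2^p (a^p + b^p)
lemma cacc_aux_addpow {p : ℝ} (hp : 0 ≤ p) {a b : ℝ} (ha : 0 ≤ a) (hb : 0 ≤ b) :
    (a + b) ^ p ≤ 2 ^ p * (a ^ p + b ^ p) := by
  have h1 : a + b ≤ 2 * max a b := by
    rcases le_total a b with h | h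
    · rw [max_eq_right h]; linarith
    · rw [max_eq_left h]; linarith
  calc (a + b) ^ p ≤ (2 * max a b) ^ p :=
        Real.rpow_le_rpow (by linarith) h1 hp
    _ = 2 ^ p * (max a b) ^ p :=
        Real.mul_rpow (by norm_num) (le_max_of_le_left ha)
    _ ≤ 2 ^ p * (a ^ p + b ^ p) := by
        gcongr 2 ^ p * ?_
        rcases le_total a b with h | h
        · rw [max_eq_right h]
          nlinarith [Real.rpow_nonneg ha p, Real.rpow_nonneg hb p]
        · rw [max_eq_left h]
          nlinarith [Real.rpow_nonneg ha p, Real.rpow_nonneg hb p]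

-- aux 3: t^(p-2) * t ≤ t^(p-1) for t ≥ 0 (p ≠ 1)
lemma cacc_aux_rpow_sub {p : ℝ} (hp : 1 < p) {t : ℝ} (ht : 0 ≤ t) :
    t ^ (p - 2) * t ≤ t ^ (p - 1) := by
  rcases eq_or_lt_of_le ht with h0 | h0
  · rw [← h0]
    simp [Real.zero_rpow (by linarith : p - 1 ≠ 0)]
  · apply le_of_eq
    rw [show t ^ (p - 2) * t = t ^ (p - 2) * t ^ (1 : ℝ) by rw [Real.rpow_one],
      ← Real.rpow_add h0]
    norm_num [show p - 2 + 1 = p - 1 by ring]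

-- aux 4: Memℒp from integrability of the power
lemma cacc_aux_memℒp {α : Type*} [MeasurableSpace α] {μ : Measure α} {f : α → ℝ} {s : ℝ}
    (hs : 0 < s) (hf : AEStronglyMeasurable f μ)
    (hint : Integrable (fun x => |f x| ^ s) μ) : MemLp f (ENNReal.ofReal s) μ := by
  have q0 : ENNReal.ofReal s ≠ 0 := by simp [ENNReal.ofReal_eq_zero, not_le, hs]
  have qt : ENNReal.ofReal s ≠ ⊤ := ENNReal.ofReal_ne_top
  have := (memLp_norm_rpow_iff (q := ENNReal.ofReal s) (p := ENNReal.ofReal s) hf q0 qt).1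
  apply this
  rw [ENNReal.div_self q0 qt]
  rw [memLp_one_iff_integrable]
  simpa [Real.norm_eq_abs, ENNReal.toReal_ofReal hs.le] using hint


set_option maxHeartbeats 2000000 in
lemma cacc_main {d : ℕ} {p : ℝ} (hp : 1 < p)
    {Ω : Set (EuclideanSpace ℝ (Fin d))} (hΩopen : IsOpen Ω)
    {r : ℝ} (hr0 : 0 < r)
    (η : EuclideanSpace ℝ (Fin d) → ℝ)
    (hηsm : ContDiff ℝ (⊤ : ℕ∞) η)
    (hη0 : ∀ x, 0 ≤ η x) (hη1 : ∀ x, η x ≤ 1)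
    (hηin : ∀ x : EuclideanSpace ℝ (Fin d), ‖x‖ ≤ r → η x = 1)
    (hηout : ∀ x : EuclideanSpace ℝ (Fin d), 2 * r < ‖x‖ → η =ᶠ[nhds x] 0)
    (K : ℝ) (hK0 : 0 ≤ K) (hηK : ∀ x, ‖gradient η x‖ ≤ K)
    (v : EuclideanSpace ℝ (Fin d) → ℝ) (hv : IsWeakNeumannSolution p Ω v) (b : ℝ) :
    ∫ x in Ω ∩ ball 0 (2 * r), ‖gradient v x‖ ^ p * η x ^ p ≤
      p * K *
        (∫ x in (Ω ∩ ball 0 (2 * r)) \ ball 0 r, ‖gradient v x‖ ^ p * η x ^ p) ^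
          ((p - 1) / p) *
        (∫ x in (Ω ∩ ball 0 (2 * r)) \ ball 0 r, |v x - b| ^ p) ^ (1 / p) := by
  obtain ⟨hv1, hv2, hv3⟩ := hv
  have hp0 : (0:ℝ) < p := by linarith
  have hp1 : p ≠ 0 := ne_of_gt hp0
  have meas_Ω : MeasurableSet Ω := hΩopen.measurableSet
  set q : ℝ := p / (p - 1) with hq
  have hpq : q.HolderConjugate p := (Real.HolderConjugate.conjExponent hp).symm
  set R : ℝ := 2 * r + 1 with hR
  have hR0 : (0:ℝ) < R := by positivity
  have hRr : 2 * r < R := by simp [hR]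
  -- η gradient facts
  have hηdiff : ∀ x, HasGradientAt η (gradient η x) x := fun x =>
    ((hηsm.differentiable (by simp)) x).hasGradientAt
  have hgradin : ∀ x : EuclideanSpace ℝ (Fin d), ‖x‖ ≤ r → gradient η x = 0 := by
    intro x hx
    have hmax : IsLocalMax η x :=
      Filter.Eventually.of_forall (fun y => by rw [hηin x hx]; exact hη1 y)
    have hfd : fderiv ℝ η x = 0 := hmax.fderiv_eq_zero
    simp [gradient, hfd]
  have hgradout : ∀ x : EuclideanSpace ℝ (Fin d), 2 * r < ‖x‖ → gradient η x = 0 := by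
    intro x hx
    have hev : η =ᶠ[nhds x] (fun _ => (0:ℝ)) := hηout x hx
    rw [hev.gradient_eq]
    simp [gradient, fderiv_const]
  have hηzout : ∀ x : EuclideanSpace ℝ (Fin d), 2 * r < ‖x‖ → η x = 0 := fun x hx => by
    simpa using (hηout x hx).eq_of_nhds
  -- continuity facts
  have hvc : ContinuousOn v Ω := hv1.continuousOn
  have hgc : ContinuousOn (gradient v) Ω :=
    (InnerProductSpace.toDual ℝ (EuclideanSpace ℝ (Fin d))).symm.continuous.comp_continuousOn
      (hv1.continuousOn_fderiv_of_isOpen hΩopen le_rfl)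
  have hηc : Continuous η := hηsm.continuous
  have hηgc : Continuous (gradient η) :=
    (InnerProductSpace.toDual ℝ (EuclideanSpace ℝ (Fin d))).symm.continuous.comp (hηsm.continuous_fderiv (by simp))
  have hvdiff : ∀ x ∈ Ω, HasGradientAt v (gradient v x) x := fun x hx =>
    ((hv1.contDiffAt (hΩopen.mem_nhds hx)).differentiableAt one_ne_zero).hasGradientAt
  -- the test function
  set ψ : EuclideanSpace ℝ (Fin d) → ℝ := fun y => (v y - b) * η y ^ p with hψdef
  have hηp1 : (1:ℝ) ≤ p := hp.le
  have hηpc1 : ContDiff ℝ 1 (fun x : EuclideanSpace ℝ (Fin d) => η x ^ p) := by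
    have h1 : ContDiff ℝ ((1:ℕ):ℕ∞) (fun t : ℝ => t ^ p) :=
      Real.contDiff_rpow_const_of_le (by rw [Nat.cast_one]; exact hηp1)
    exact (h1.comp (hηsm.of_le (by simp))).of_le (by norm_num)
  have hψc1 : ContDiffOn ℝ 1 ψ Ω := (hv1.sub contDiffOn_const).mul hηpc1.contDiffOn
  have hψout : ∀ x : EuclideanSpace ℝ (Fin d), 2 * r < ‖x‖ → ψ =ᶠ[nhds x] 0 := by
    intro x hx
    filter_upwards [hηout x hx] with y hy
    simp [hψdef, hy, Real.zero_rpow hp1]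
  have hψsupp : Function.support ψ ⊆ closedBall 0 (2 * r) := by
    intro x hx
    rw [mem_closedBall_zero_iff]
    by_contra hcon
    exact hx ((hψout x (not_le.1 hcon)).eq_of_nhds)
  have hψgrad : ∀ x ∈ Ω, HasGradientAt ψ
      ((v x - b) • ((p * η x ^ (p - 1)) • gradient η x) + η x ^ p • gradient v x) x := by
    intro x hx
    have h1 : HasFDerivAt (fun y => v y - b)
        (InnerProductSpace.toDual ℝ _ (gradient v x)) x :=
      (hasGradientAt_iff_hasFDerivAt.1 (hvdiff x hx)).sub_const b
    have h2 : HasFDerivAt η (InnerProductSpace.toDual ℝ _ (gradient η x)) x :=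
      hasGradientAt_iff_hasFDerivAt.1 (hηdiff x)
    have h3 : HasDerivAt (fun t : ℝ => t ^ p) (p * η x ^ (p - 1)) (η x) :=
      Real.hasDerivAt_rpow_const (Or.inr hηp1)
    have h4 := h3.comp_hasFDerivAt x h2
    have h5 := h1.mul h4
    rw [hasGradientAt_iff_hasFDerivAt]
    refine h5.congr_fderiv ?_
    ext u
    simp [Function.comp, inner_add_left, real_inner_smul_left]
  have hgradψ : ∀ x ∈ Ω, gradient ψ x =
      (v x - b) • ((p * η x ^ (p - 1)) • gradient η x) + η x ^ p • gradient v x :=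
    fun x hx => (hψgrad x hx).gradient
  -- main pointwise objects
  set G : EuclideanSpace ℝ (Fin d) → ℝ := fun x => ‖gradient v x‖ ^ p * η x ^ p with hGdef
  set H : EuclideanSpace ℝ (Fin d) → ℝ := fun x =>
    p * ((v x - b) * (η x ^ (p - 1) *
      (‖gradient v x‖ ^ (p - 2) * ⟪gradient v x, gradient η x⟫))) with hHdef
  set f : EuclideanSpace ℝ (Fin d) → ℝ := fun x => η x ^ (p - 1) * ‖gradient v x‖ ^ (p - 1)
    with hfdef
  set g : EuclideanSpace ℝ (Fin d) → ℝ := fun x => |v x - b| with hgdef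
  have hG0 : ∀ x, 0 ≤ G x := fun x =>
    mul_nonneg (Real.rpow_nonneg (norm_nonneg _) _) (Real.rpow_nonneg (hη0 x) _)
  have hf0 : ∀ x, 0 ≤ f x := fun x =>
    mul_nonneg (Real.rpow_nonneg (hη0 x) _) (Real.rpow_nonneg (norm_nonneg _) _)
  have hg0 : ∀ x, 0 ≤ g x := fun x => abs_nonneg _
  -- pointwise identity on Ω
  have hkey : ∀ x ∈ Ω,
      ‖gradient v x‖ ^ (p - 2) * ⟪gradient v x, gradient ψ x⟫ = G x + H x := by
    intro x hx
    rw [hgradψ x hx]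
    rw [inner_add_right, real_inner_smul_right, real_inner_smul_right, real_inner_smul_right]
    rcases eq_or_ne (gradient v x) 0 with h0 | h0
    · simp [hGdef, hHdef, h0, Real.zero_rpow hp1]
    · have hn : (0:ℝ) < ‖gradient v x‖ := norm_pos_iff.2 h0
      have hsq : ⟪gradient v x, gradient v x⟫ = ‖gradient v x‖ * ‖gradient v x‖ :=
        real_inner_self_eq_norm_mul_norm _
      rw [hsq]
      have hpow : ‖gradient v x‖ ^ (p - 2) * (‖gradient v x‖ * ‖gradient v x‖)
          = ‖gradient v x‖ ^ p := by
        rw [show ‖gradient v x‖ * ‖gradient v x‖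
            = ‖gradient v x‖ ^ (1:ℝ) * ‖gradient v x‖ ^ (1:ℝ) by rw [Real.rpow_one],
          ← Real.rpow_add hn, ← Real.rpow_add hn]
        norm_num
      simp only [hGdef, hHdef]
      linear_combination (η x ^ p) * hpow
  -- vanishing facts
  have hGout : ∀ x : EuclideanSpace ℝ (Fin d), 2 * r < ‖x‖ → G x = 0 := by
    intro x hx
    simp [hGdef, hηzout x hx, Real.zero_rpow hp1]
  have hHout : ∀ x : EuclideanSpace ℝ (Fin d),
      x ∉ closedBall (0:EuclideanSpace ℝ (Fin d)) (2*r) \ closedBall 0 r → H x = 0 := by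
    intro x hx
    rw [Set.mem_diff, mem_closedBall_zero_iff, mem_closedBall_zero_iff] at hx
    push_neg at hx
    rcases le_or_gt ‖x‖ (2*r) with h1 | h1
    · simp only [hHdef, hgradin x (hx h1), inner_zero_right, mul_zero]
    · simp only [hHdef, hgradout x h1, inner_zero_right, mul_zero]
  -- |H| ≤ p K f g
  have hnorm_ineq : ∀ u : EuclideanSpace ℝ (Fin d), ‖u‖ ^ (p-2) * ‖u‖ ≤ ‖u‖ ^ (p-1) :=
    fun u => cacc_aux_rpow_sub hp (norm_nonneg u)
  have hHbound : ∀ x, |H x| ≤ p * K * (f x * g x) := by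
    intro x
    have h1 : |H x| = p * (g x * (η x ^ (p-1) *
        |‖gradient v x‖ ^ (p - 2) * ⟪gradient v x, gradient η x⟫|)) := by
      simp only [hHdef, hgdef, abs_mul, abs_of_nonneg hp0.le,
        abs_of_nonneg (Real.rpow_nonneg (hη0 x) (p-1))]
    rw [h1]
    have h2 : |‖gradient v x‖ ^ (p - 2) * ⟪gradient v x, gradient η x⟫|
        ≤ ‖gradient v x‖ ^ (p-1) * K := by
      rw [abs_mul, abs_of_nonneg (Real.rpow_nonneg (norm_nonneg _) _)]
      calc ‖gradient v x‖ ^ (p - 2) * |⟪gradient v x, gradient η x⟫|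
          ≤ ‖gradient v x‖ ^ (p - 2) * (‖gradient v x‖ * ‖gradient η x‖) :=
            mul_le_mul_of_nonneg_left (abs_real_inner_le_norm _ _)
              (Real.rpow_nonneg (norm_nonneg _) _)
        _ ≤ ‖gradient v x‖ ^ (p-1) * K := by
            rw [← mul_assoc]
            exact mul_le_mul (hnorm_ineq _) (hηK x) (norm_nonneg _)
              (Real.rpow_nonneg (norm_nonneg _) _)
    calc p * (g x * (η x ^ (p-1) *
        |‖gradient v x‖ ^ (p - 2) * ⟪gradient v x, gradient η x⟫|))
        ≤ p * (g x * (η x ^ (p-1) * (‖gradient v x‖ ^ (p-1) * K))) :=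
          mul_le_mul_of_nonneg_left (mul_le_mul_of_nonneg_left
            (mul_le_mul_of_nonneg_left h2 (Real.rpow_nonneg (hη0 x) _)) (hg0 x)) hp0.le
      _ = p * K * (f x * g x) := by simp only [hfdef]; ring
  -- extension helper
  have hmeasΩball : MeasurableSet (Ω ∩ ball (0:EuclideanSpace ℝ (Fin d)) R) :=
    meas_Ω.inter measurableSet_ball
  have hext : ∀ F : EuclideanSpace ℝ (Fin d) → ℝ,
      (∀ x ∈ Ω \ ball 0 R, F x = 0) → IntegrableOn F (Ω ∩ ball 0 R) → IntegrableOn F Ω := by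
    intro F h0 hint
    have h2 : IntegrableOn F (Ω \ ball 0 R) :=
      (integrableOn_zero (μ := volume)).congr_fun (fun x hx => (h0 x hx).symm)
        (meas_Ω.diff measurableSet_ball)
    exact (hint.union h2).mono_set (by rw [Set.inter_union_diff])
  have hfin : volume (Ω ∩ ball (0:EuclideanSpace ℝ (Fin d)) R) < ⊤ :=
    lt_of_le_of_lt (measure_mono Set.inter_subset_right) measure_ball_lt_top
  have hD : IntegrableOn (fun x => |v x| ^ p + ‖gradient v x‖ ^ p)
      (Ω ∩ ball 0 R) := hv2 R hR0
  have hconst : ∀ c : ℝ, IntegrableOn (fun _ => c)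
      (Ω ∩ ball (0:EuclideanSpace ℝ (Fin d)) R) := fun c =>
    integrableOn_const hfin.ne
  have hdom : ∀ (F Dm : EuclideanSpace ℝ (Fin d) → ℝ), ContinuousOn F Ω →
      IntegrableOn Dm (Ω ∩ ball 0 R) → (∀ x, |F x| ≤ Dm x) →
      IntegrableOn F (Ω ∩ ball 0 R) := fun F Dm hc hDm hb =>
    Integrable.mono' hDm ((hc.mono Set.inter_subset_left).aestronglyMeasurable hmeasΩball)
      (ae_of_all _ hb)
  -- continuity on Ω of the various integrands
  have hGcont : ContinuousOn G Ω :=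
    (hgc.norm.rpow_const (fun x _ => Or.inr hp0.le)).mul
      (hηc.continuousOn.rpow_const (fun x _ => Or.inr hp0.le))
  have hg_cont : ContinuousOn g Ω := (hvc.sub continuousOn_const).abs
  have hf_cont : ContinuousOn f Ω :=
    (hηc.continuousOn.rpow_const (fun x _ => Or.inr (by linarith))).mul
      (hgc.norm.rpow_const (fun x _ => Or.inr (by linarith)))
  have hΦ : Continuous (fun u : EuclideanSpace ℝ (Fin d) => ‖u‖ ^ (p-2) • u) :=
    cacc_aux_cont hp
  have hHrw : ∀ x, H x = p * ((v x - b) * (η x ^ (p - 1) *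
      ⟪(‖gradient v x‖ ^ (p-2)) • gradient v x, gradient η x⟫)) := by
    intro x; simp only [hHdef, real_inner_smul_left]
  have hHcont : ContinuousOn H Ω := by
    have hc : ContinuousOn (fun x => p * ((v x - b) * (η x ^ (p - 1) *
        ⟪(‖gradient v x‖ ^ (p-2)) • gradient v x, gradient η x⟫))) Ω :=
      continuousOn_const.mul ((hvc.sub continuousOn_const).mul
        ((hηc.continuousOn.rpow_const (fun x _ => Or.inr (by linarith))).mul
          ((hΦ.comp_continuousOn hgc).inner hηgc.continuousOn)))
    exact hc.congr (fun x _ => hHrw x)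
  -- basic integrable pieces
  have hvp_int : IntegrableOn (fun x => |v x| ^ p) (Ω ∩ ball 0 R) := by
    refine hdom _ _ (hvc.abs.rpow_const (fun x _ => Or.inr hp0.le)) hD (fun x => ?_)
    rw [abs_of_nonneg (Real.rpow_nonneg (abs_nonneg _) _)]
    exact le_add_of_nonneg_right (Real.rpow_nonneg (norm_nonneg _) _)
  have hgrad_p : IntegrableOn (fun x => ‖gradient v x‖ ^ p) (Ω ∩ ball 0 R) := by
    refine hdom _ _ (hgc.norm.rpow_const (fun x _ => Or.inr hp0.le)) hD (fun x => ?_)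
    rw [abs_of_nonneg (Real.rpow_nonneg (norm_nonneg _) _)]
    exact le_add_of_nonneg_left (Real.rpow_nonneg (abs_nonneg _) _)
  have hwp_bound : ∀ x, |v x - b| ^ p ≤ 2 ^ p * (|v x| ^ p + |b| ^ p) := by
    intro x
    calc |v x - b| ^ p ≤ (|v x| + |b|) ^ p := by
          apply Real.rpow_le_rpow (abs_nonneg _) _ hp0.le
          simpa [Real.norm_eq_abs] using norm_sub_le (v x) b
      _ ≤ 2 ^ p * (|v x| ^ p + |b| ^ p) :=
          cacc_aux_addpow hp0.le (abs_nonneg _) (abs_nonneg _)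
  have hDb : IntegrableOn (fun x => 2 ^ p * (|v x| ^ p + |b| ^ p)) (Ω ∩ ball 0 R) :=
    ((hvp_int.add (hconst (|b| ^ p))).const_mul (2 ^ p))
  have hgp_int_R : IntegrableOn (fun x => |v x - b| ^ p) (Ω ∩ ball 0 R) := by
    refine hdom _ _ ((hvc.sub continuousOn_const).abs.rpow_const
      (fun x _ => Or.inr hp0.le)) hDb (fun x => ?_)
    rw [abs_of_nonneg (Real.rpow_nonneg (abs_nonneg _) _)]
    exact hwp_bound x
  -- G integrability on Ω
  have hGR : IntegrableOn G (Ω ∩ ball 0 R) := by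
    refine hdom _ _ hGcont hD (fun x => ?_)
    rw [abs_of_nonneg (hG0 x)]
    calc G x ≤ ‖gradient v x‖ ^ p * 1 := by
          apply mul_le_mul_of_nonneg_left (Real.rpow_le_one (hη0 x) (hη1 x) hp0.le)
            (Real.rpow_nonneg (norm_nonneg _) _)
      _ = ‖gradient v x‖ ^ p := mul_one _
      _ ≤ |v x| ^ p + ‖gradient v x‖ ^ p :=
          le_add_of_nonneg_left (Real.rpow_nonneg (abs_nonneg _) _)
  have hGint : IntegrableOn G Ω := by
    refine hext G (fun x hx => hGout x ?_) hGR
    have hb2 := hx.2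
    rw [mem_ball_zero_iff, not_lt] at hb2
    linarith
  -- rpow conjugate identity  f^q = G
  have hpm1 : p - 1 ≠ 0 := by linarith
  have hpq_mul : (p - 1) * q = p := by rw [hq]; field_simp
  have hfq_eq : ∀ x, f x ^ q = G x := by
    intro x
    simp only [hfdef, hGdef]
    rw [Real.mul_rpow (Real.rpow_nonneg (hη0 x) _) (Real.rpow_nonneg (norm_nonneg _) _),
      ← Real.rpow_mul (hη0 x), ← Real.rpow_mul (norm_nonneg _), hpq_mul, mul_comm]
  have hfq_int : IntegrableOn (fun x => f x ^ q) (Ω ∩ ball 0 R) :=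
    hGR.congr_fun (fun x _ => (hfq_eq x).symm) hmeasΩball
  -- f*g integrability
  have hfg_le : ∀ x, f x * g x ≤ (|v x| ^ p + ‖gradient v x‖ ^ p)
      + 2 ^ p * (|v x| ^ p + |b| ^ p) := by
    intro x
    have hy := Real.young_inequality_of_nonneg (hf0 x) (hg0 x) hpq
    have h1 : f x ^ q / q ≤ G x := by
      rw [hfq_eq x]
      exact div_le_self (hG0 x) hpq.lt.le
    have h2 : g x ^ p / p ≤ g x ^ p := div_le_self (Real.rpow_nonneg (hg0 x) _) hp.le
    have h3 : G x ≤ |v x| ^ p + ‖gradient v x‖ ^ p := by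
      calc G x ≤ ‖gradient v x‖ ^ p * 1 :=
            mul_le_mul_of_nonneg_left (Real.rpow_le_one (hη0 x) (hη1 x) hp0.le)
              (Real.rpow_nonneg (norm_nonneg _) _)
        _ = ‖gradient v x‖ ^ p := mul_one _
        _ ≤ _ := le_add_of_nonneg_left (Real.rpow_nonneg (abs_nonneg _) _)
    have h4 : g x ^ p ≤ 2 ^ p * (|v x| ^ p + |b| ^ p) := by
      simp only [hgdef]
      exact hwp_bound x
    linarith
  have hfgR : IntegrableOn (fun x => f x * g x) (Ω ∩ ball 0 R) := by
    refine hdom _ _ (hf_cont.mul hg_cont) (hD.add hDb) (fun x => ?_)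
    rw [abs_of_nonneg (mul_nonneg (hf0 x) (hg0 x))]
    exact hfg_le x
  -- H integrability on Ω
  have hHR : IntegrableOn H (Ω ∩ ball 0 R) := by
    refine hdom _ _ hHcont (((hD.add hDb)).const_mul (p * K)) (fun x => ?_)
    calc |H x| ≤ p * K * (f x * g x) := hHbound x
      _ ≤ p * K * ((|v x| ^ p + ‖gradient v x‖ ^ p) + 2 ^ p * (|v x| ^ p + |b| ^ p)) :=
          mul_le_mul_of_nonneg_left (hfg_le x) (by positivity)
  have hHint : IntegrableOn H Ω := by
    refine hext H (fun x hx => hHout x (fun hmem => ?_)) hHR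
    have h1 := hx.2
    rw [mem_ball_zero_iff, not_lt] at h1
    have h2 := hmem.1
    rw [mem_closedBall_zero_iff] at h2
    linarith
  -- ψ integrand integrability
  set Γ : EuclideanSpace ℝ (Fin d) → EuclideanSpace ℝ (Fin d) := fun x =>
    (v x - b) • ((p * η x ^ (p - 1)) • gradient η x) + η x ^ p • gradient v x with hΓdef
  have hΓcont : ContinuousOn Γ Ω :=
    ((hvc.sub continuousOn_const).smul ((continuousOn_const.mul
      (hηc.continuousOn.rpow_const (fun x _ => Or.inr (by linarith)))).smul
        hηgc.continuousOn)).add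
      ((hηc.continuousOn.rpow_const (fun x _ => Or.inr hp0.le)).smul hgc)
  have hψcont : ContinuousOn ψ Ω :=
    (hvc.sub continuousOn_const).mul hηpc1.continuous.continuousOn
  have hΓbound : ∀ x, ‖Γ x‖ ≤ p * K * |v x - b| + ‖gradient v x‖ := by
    intro x
    calc ‖Γ x‖ ≤ ‖(v x - b) • ((p * η x ^ (p - 1)) • gradient η x)‖
        + ‖η x ^ p • gradient v x‖ := norm_add_le _ _
      _ ≤ p * K * |v x - b| + ‖gradient v x‖ := by
          apply add_le_add
          · rw [norm_smul, norm_smul, Real.norm_eq_abs, Real.norm_eq_abs,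
              abs_of_nonneg (mul_nonneg hp0.le (Real.rpow_nonneg (hη0 x) _))]
            calc |v x - b| * (p * η x ^ (p-1) * ‖gradient η x‖)
                ≤ |v x - b| * (p * 1 * K) := by
                  apply mul_le_mul_of_nonneg_left _ (abs_nonneg _)
                  apply mul_le_mul _ (hηK x) (norm_nonneg _) (by positivity)
                  exact mul_le_mul_of_nonneg_left
                    (Real.rpow_le_one (hη0 x) (hη1 x) (by linarith)) hp0.le
              _ = p * K * |v x - b| := by ring
          · rw [norm_smul, Real.norm_eq_abs,
              abs_of_nonneg (Real.rpow_nonneg (hη0 x) _)]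
            calc η x ^ p * ‖gradient v x‖ ≤ 1 * ‖gradient v x‖ :=
                  mul_le_mul_of_nonneg_right (Real.rpow_le_one (hη0 x) (hη1 x) hp0.le)
                    (norm_nonneg _)
              _ = ‖gradient v x‖ := one_mul _
  have hψR0 : IntegrableOn (fun x => |ψ x| ^ p + ‖Γ x‖ ^ p) (Ω ∩ ball 0 R) := by
    refine hdom _ (fun x => 2 ^ p * (|v x| ^ p + |b| ^ p) +
        2 ^ p * ((p * K) ^ p * (2 ^ p * (|v x| ^ p + |b| ^ p)) + ‖gradient v x‖ ^ p))
      ((hψcont.abs.rpow_const (fun x _ => Or.inr hp0.le)).add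
        (hΓcont.norm.rpow_const (fun x _ => Or.inr hp0.le)))
      (hDb.add (((hDb.const_mul ((p*K) ^ p)).add hgrad_p).const_mul (2 ^ p)))
      (fun x => ?_)
    rw [abs_of_nonneg (add_nonneg (Real.rpow_nonneg (abs_nonneg _) _)
      (Real.rpow_nonneg (norm_nonneg _) _))]
    apply add_le_add
    · calc |ψ x| ^ p ≤ |v x - b| ^ p := by
            apply Real.rpow_le_rpow (abs_nonneg _) _ hp0.le
            simp only [hψdef]
            rw [abs_mul, abs_of_nonneg (Real.rpow_nonneg (hη0 x) _)]
            calc |v x - b| * η x ^ p ≤ |v x - b| * 1 :=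
                  mul_le_mul_of_nonneg_left (Real.rpow_le_one (hη0 x) (hη1 x) hp0.le)
                    (abs_nonneg _)
              _ = |v x - b| := mul_one _
        _ ≤ 2 ^ p * (|v x| ^ p + |b| ^ p) := hwp_bound x
    · calc ‖Γ x‖ ^ p ≤ (p * K * |v x - b| + ‖gradient v x‖) ^ p :=
            Real.rpow_le_rpow (norm_nonneg _) (hΓbound x) hp0.le
        _ ≤ 2 ^ p * ((p * K * |v x - b|) ^ p + ‖gradient v x‖ ^ p) :=
            cacc_aux_addpow hp0.le (by positivity) (norm_nonneg _)
        _ ≤ 2 ^ p * ((p * K) ^ p * (2 ^ p * (|v x| ^ p + |b| ^ p)) + ‖gradient v x‖ ^ p) := by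
            apply mul_le_mul_of_nonneg_left _ (by positivity : (0:ℝ) ≤ 2 ^ p)
            apply add_le_add_left
            rw [Real.mul_rpow (by positivity) (abs_nonneg _)]
            exact mul_le_mul_of_nonneg_left (hwp_bound x) (Real.rpow_nonneg (by positivity) _)
  have hψR : IntegrableOn (fun x => |ψ x| ^ p + ‖gradient ψ x‖ ^ p) (Ω ∩ ball 0 R) := by
    refine hψR0.congr_fun (fun x hx => ?_) hmeasΩball
    rw [hgradψ x hx.1]
  have hψint : IntegrableOn (fun x => |ψ x| ^ p + ‖gradient ψ x‖ ^ p) Ω := by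
    refine hext _ (fun x hx => ?_) hψR
    have h1 := hx.2
    rw [mem_ball_zero_iff, not_lt] at h1
    have h2 : 2 * r < ‖x‖ := by linarith
    have hψ0 : ψ x = 0 := by simpa using (hψout x h2).eq_of_nhds
    have hgψ0 : gradient ψ x = 0 := by
      have hev : ψ =ᶠ[nhds x] (fun _ => (0:ℝ)) := hψout x h2
      rw [hev.gradient_eq]
      simp [gradient, fderiv_const]
    rw [hψ0, hgψ0]
    simp [Real.zero_rpow hp1]
  -- weak formulation
  have hψbdd : Bornology.IsBounded (Function.support ψ) :=
    (isBounded_closedBall).subset hψsupp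
  have h0 := hv3 ψ hψc1 hψbdd hψint
  have hEq : Set.EqOn (fun x => ‖gradient v x‖ ^ (p - 2) * ⟪gradient v x, gradient ψ x⟫)
      (fun x => G x + H x) Ω := fun x hx => hkey x hx
  rw [setIntegral_congr_fun meas_Ω hEq, integral_add hGint hHint] at h0
  have hGH : ∫ x in Ω, G x = - ∫ x in Ω, H x := by linarith
  have hstep1 : ∫ x in Ω ∩ ball 0 (2 * r), G x ≤ ∫ x in Ω, G x :=
    setIntegral_mono_set hGint (ae_of_all _ hG0)
      (HasSubset.Subset.eventuallyLE Set.inter_subset_left)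
  have habs : - ∫ x in Ω, H x ≤ ∫ x in Ω, |H x| := by
    calc - ∫ x in Ω, H x ≤ |∫ x in Ω, H x| := neg_le_abs _
      _ ≤ ∫ x in Ω, |H x| := by
          simpa [Real.norm_eq_abs] using
            norm_integral_le_integral_norm (μ := volume.restrict Ω) H
  -- localization of |H|
  set A : Set (EuclideanSpace ℝ (Fin d)) :=
    closedBall 0 (2*r) \ closedBall 0 r with hAdef
  have hAmeas : MeasurableSet A := measurableSet_closedBall.diff measurableSet_closedBall
  have hsplitH : ∫ x in Ω, |H x| = ∫ x in Ω ∩ A, |H x| := by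
    have hunion : (Ω ∩ A) ∪ (Ω \ A) = Ω := Set.inter_union_diff Ω A
    have hdisj : Disjoint (Ω ∩ A) (Ω \ A) :=
      Set.disjoint_sdiff_right.mono_left Set.inter_subset_right
    calc ∫ x in Ω, |H x| = ∫ x in (Ω ∩ A) ∪ (Ω \ A), |H x| := by rw [hunion]
      _ = (∫ x in Ω ∩ A, |H x|) + ∫ x in Ω \ A, |H x| :=
          setIntegral_union hdisj (meas_Ω.diff hAmeas)
            (IntegrableOn.mono_set hHint.abs Set.inter_subset_left)
            (IntegrableOn.mono_set hHint.abs Set.diff_subset)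
      _ = ∫ x in Ω ∩ A, |H x| := by
          have hzero : Set.EqOn (fun x => |H x|) (fun _ => (0:ℝ)) (Ω \ A) := by
            intro x hx
            show |H x| = 0
            rw [hHout x hx.2, abs_zero]
          rw [setIntegral_congr_fun (meas_Ω.diff hAmeas) hzero, integral_zero, add_zero]
  set S : Set (EuclideanSpace ℝ (Fin d)) := (Ω ∩ ball 0 (2 * r)) \ ball 0 r with hSdef
  have hSmeas : MeasurableSet S := (meas_Ω.inter measurableSet_ball).diff measurableSet_ball
  have hSsubΩ : S ⊆ Ω := fun x hx => hx.1.1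
  have hSsubR : S ⊆ Ω ∩ ball 0 R := fun x hx =>
    ⟨hx.1.1, mem_ball_zero_iff.2 (lt_trans (mem_ball_zero_iff.1 hx.1.2) hRr)⟩
  have hs1 : volume (sphere (0:EuclideanSpace ℝ (Fin d)) r) = 0 :=
    Measure.addHaar_sphere_of_ne_zero volume 0 hr0.ne'
  have hs2 : volume (sphere (0:EuclideanSpace ℝ (Fin d)) (2*r)) = 0 :=
    Measure.addHaar_sphere_of_ne_zero volume 0 (by positivity)
  have hAe : (Ω ∩ A : Set (EuclideanSpace ℝ (Fin d))) =ᵐ[volume] S := by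
    rw [MeasureTheory.ae_eq_set]
    constructor
    · refine measure_mono_null (fun x hx => ?_)
        (measure_union_null hs2 hs1 :
          volume (sphere (0:EuclideanSpace ℝ (Fin d)) (2*r) ∪ sphere 0 r) = 0)
      obtain ⟨⟨hxΩ, hxA⟩, hnot⟩ := hx
      obtain ⟨hx2, hxr⟩ := hxA
      rw [mem_closedBall_zero_iff] at hx2
      have hxr' : r < ‖x‖ := by
        by_contra h
        exact hxr (mem_closedBall_zero_iff.2 (not_lt.1 h))
      left
      rw [mem_sphere_zero_iff_norm]
      rcases eq_or_lt_of_le hx2 with he | hl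
      · exact he
      · exact absurd ⟨⟨hxΩ, mem_ball_zero_iff.2 hl⟩,
          fun hb => absurd (mem_ball_zero_iff.1 hb) (not_lt.2 hxr'.le)⟩ hnot
    · refine measure_mono_null (fun x hx => ?_)
        (measure_union_null hs2 hs1 :
          volume (sphere (0:EuclideanSpace ℝ (Fin d)) (2*r) ∪ sphere 0 r) = 0)
      obtain ⟨⟨⟨hxΩ, hx2⟩, hxr⟩, hnot⟩ := hx
      rw [mem_ball_zero_iff] at hx2
      have hxr' : r ≤ ‖x‖ := not_lt.1 (fun h => hxr (mem_ball_zero_iff.2 h))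
      right
      rw [mem_sphere_zero_iff_norm]
      rcases eq_or_lt_of_le hxr' with he | hl
      · exact he.symm
      · exact absurd ⟨hxΩ, ⟨mem_closedBall_zero_iff.2 hx2.le,
          fun hc => absurd (mem_closedBall_zero_iff.1 hc) (not_le.2 hl)⟩⟩ hnot
  have hstep2 : ∫ x in Ω ∩ A, |H x| = ∫ x in S, |H x| := setIntegral_congr_set hAe
  have hH3 : ∫ x in S, |H x| ≤ ∫ x in S, p * K * (f x * g x) :=
    setIntegral_mono_on (IntegrableOn.mono_set hHint.abs hSsubΩ)
      ((hfgR.mono_set hSsubR).const_mul (p*K)) hSmeas (fun x _ => hHbound x)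
  have hfAESM : AEStronglyMeasurable f (volume.restrict S) :=
    (hf_cont.mono hSsubΩ).aestronglyMeasurable hSmeas
  have hgAESM : AEStronglyMeasurable g (volume.restrict S) :=
    (hg_cont.mono hSsubΩ).aestronglyMeasurable hSmeas
  have hfq_int' : Integrable (fun x => |f x| ^ q) (volume.restrict S) :=
    (hfq_int.mono_set hSsubR).congr
      (ae_of_all _ (fun x => by
        show f x ^ q = |f x| ^ q
        rw [abs_of_nonneg (hf0 x)]))
  have hf_mem : MemLp f (ENNReal.ofReal q) (volume.restrict S) :=
    cacc_aux_memℒp hpq.pos hfAESM hfq_int'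
  have hgp_int' : Integrable (fun x => |g x| ^ p) (volume.restrict S) :=
    (hgp_int_R.mono_set hSsubR).congr
      (ae_of_all _ (fun x => by
        show |v x - b| ^ p = |g x| ^ p
        simp only [hgdef, abs_abs]))
  have hg_mem : MemLp g (ENNReal.ofReal p) (volume.restrict S) :=
    cacc_aux_memℒp hp0 hgAESM hgp_int'
  have hHolder := integral_mul_le_Lp_mul_Lq_of_nonneg hpq
    (ae_of_all _ hf0) (ae_of_all _ hg0) hf_mem hg_mem
  have hBeq : ∫ x in S, f x ^ q = ∫ x in S, G x :=
    integral_congr_ae (ae_of_all _ hfq_eq)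
  have hCeq : ∫ x in S, g x ^ p = ∫ x in S, |v x - b| ^ p :=
    integral_congr_ae (ae_of_all _ (fun x => by simp only [hgdef]))
  have hq1 : 1 / q = (p - 1) / p := by rw [hq, one_div_div]
  calc ∫ x in Ω ∩ ball 0 (2 * r), G x
      ≤ ∫ x in Ω, G x := hstep1
    _ = - ∫ x in Ω, H x := hGH
    _ ≤ ∫ x in Ω, |H x| := habs
    _ = ∫ x in Ω ∩ A, |H x| := hsplitH
    _ = ∫ x in S, |H x| := hstep2
    _ ≤ ∫ x in S, p * K * (f x * g x) := hH3
    _ = p * K * ∫ x in S, f x * g x := integral_const_mul _ _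
    _ ≤ p * K * ((∫ x in S, f x ^ q) ^ (1/q) * (∫ x in S, g x ^ p) ^ (1/p)) :=
        mul_le_mul_of_nonneg_left hHolder (by positivity)
    _ = p * K * (∫ x in S, G x) ^ ((p-1)/p) * (∫ x in S, |v x - b| ^ p) ^ (1/p) := by
        rw [hBeq, hCeq, hq1]
        ring

set_option maxHeartbeats 1000000 in
/-- Proposition 2, Neumann case: the Caccioppoli-type inequality for weak
solutions with homogeneous Neumann boundary conditions, for every `b ∈ ℝ`. -/
theorem caccioppoli_neumann {d : ℕ} (hd : 2 ≤ d) (p : ℝ) (hp : 1 < p)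
    (Ω : Set (EuclideanSpace ℝ (Fin d))) (hΩ : IsExteriorDomain Ω)
    (r₀ : ℝ) (hr₀ : 0 < r₀) (hr₀Ω : Ωᶜ ⊆ ball 0 r₀)
    -- the fixed cut-off function φ, with φ_r x = φ (x / r)
    (φ : EuclideanSpace ℝ (Fin d) → ℝ)
    (hφsmooth : ContDiff ℝ (⊤ : ℕ∞) φ)
    (hφsupp : tsupport φ ⊆ closedBall 0 2)
    (hφrange : ∀ x, φ x ∈ Set.Icc (0 : ℝ) 1)
    (hφone : ∀ x ∈ closedBall (0 : EuclideanSpace ℝ (Fin d)) 1, φ x = 1)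
    (C₀ : ℝ) (hC₀ : C₀ = p * ⨆ x : EuclideanSpace ℝ (Fin d), ‖gradient φ x‖)
    (v : EuclideanSpace ℝ (Fin d) → ℝ)
    (hv : IsWeakNeumannSolution p Ω v) :
    ∀ b : ℝ, ∀ r ≥ r₀,
      ∫ x in Ω ∩ ball 0 (2 * r), ‖gradient v x‖ ^ p * φ (r⁻¹ • x) ^ p ≤
        C₀ / r *
          (∫ x in (Ω ∩ ball 0 (2 * r)) \ ball 0 r,
            ‖gradient v x‖ ^ p * φ (r⁻¹ • x) ^ p) ^ ((p - 1) / p) *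
          (∫ x in (Ω ∩ ball 0 (2 * r)) \ ball 0 r, |v x - b| ^ p) ^ (1 / p) := by
  intro b r hr
  have hr0 : (0:ℝ) < r := lt_of_lt_of_le hr₀ hr
  set M : ℝ := ⨆ x : EuclideanSpace ℝ (Fin d), ‖gradient φ x‖ with hM
  -- gradient φ is bounded
  have hφcs : HasCompactSupport φ :=
    HasCompactSupport.intro (isCompact_closedBall _ _)
      (fun x hx => image_eq_zero_of_notMem_tsupport (fun h => hx (hφsupp h)))
  have hgradφc : Continuous (gradient φ) :=
    (InnerProductSpace.toDual ℝ (EuclideanSpace ℝ (Fin d))).symm.continuous.comp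
      (hφsmooth.continuous_fderiv (by simp))
  have hgradφcs : HasCompactSupport (gradient φ) :=
    (hφcs.fderiv (𝕜 := ℝ)).comp_left
      (g := ((InnerProductSpace.toDual ℝ (EuclideanSpace ℝ (Fin d))).symm)) (map_zero _)
  have hbdd : BddAbove (Set.range fun y => ‖gradient φ y‖) :=
    hgradφc.norm.bddAbove_range_of_hasCompactSupport hgradφcs.norm
  have hMle : ∀ y, ‖gradient φ y‖ ≤ M := fun y => le_ciSup hbdd y
  have hM0 : 0 ≤ M := le_trans (norm_nonneg _) (hMle 0)
  -- the rescaled cut-off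
  have hφd : ∀ y, HasGradientAt φ (gradient φ y) y := fun y =>
    ((hφsmooth.differentiable (by simp)) y).hasGradientAt
  have hηsm : ContDiff ℝ (⊤ : ℕ∞) (fun x : EuclideanSpace ℝ (Fin d) => φ (r⁻¹ • x)) :=
    hφsmooth.comp (contDiff_const_smul _)
  have hηin : ∀ x : EuclideanSpace ℝ (Fin d), ‖x‖ ≤ r → φ (r⁻¹ • x) = 1 := by
    intro x hx
    apply hφone
    rw [mem_closedBall_zero_iff, norm_smul, norm_inv, Real.norm_eq_abs, abs_of_pos hr0]
    have h1 : r⁻¹ * ‖x‖ ≤ r⁻¹ * r := mul_le_mul_of_nonneg_left hx (inv_nonneg.2 hr0.le)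
    rwa [inv_mul_cancel₀ hr0.ne'] at h1
  have hηout : ∀ x : EuclideanSpace ℝ (Fin d), 2 * r < ‖x‖ →
      (fun y : EuclideanSpace ℝ (Fin d) => φ (r⁻¹ • y)) =ᶠ[nhds x] 0 := by
    intro x hx
    have hmem : r⁻¹ • x ∉ tsupport φ := by
      intro hmem
      have h2 := mem_closedBall_zero_iff.1 (hφsupp hmem)
      rw [norm_smul, norm_inv, Real.norm_eq_abs, abs_of_pos hr0] at h2
      have h3 : r * (r⁻¹ * ‖x‖) ≤ r * 2 := mul_le_mul_of_nonneg_left h2 hr0.le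
      rw [← mul_assoc, mul_inv_cancel₀ hr0.ne', one_mul] at h3
      linarith
    have h0 : φ =ᶠ[nhds (r⁻¹ • x)] 0 := notMem_tsupport_iff_eventuallyEq.1 hmem
    exact h0.comp_tendsto ((continuous_const_smul r⁻¹).tendsto x)
  have hgradη : ∀ x : EuclideanSpace ℝ (Fin d),
      gradient (fun y : EuclideanSpace ℝ (Fin d) => φ (r⁻¹ • y)) x
        = r⁻¹ • gradient φ (r⁻¹ • x) := by
    intro x
    have h1 : HasFDerivAt φ
        (InnerProductSpace.toDual ℝ _ (gradient φ (r⁻¹ • x))) (r⁻¹ • x) :=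
      hasGradientAt_iff_hasFDerivAt.1 (hφd _)
    have h2 : HasFDerivAt (fun y : EuclideanSpace ℝ (Fin d) => r⁻¹ • y)
        (r⁻¹ • ContinuousLinearMap.id ℝ (EuclideanSpace ℝ (Fin d))) x :=
      (hasFDerivAt_id x).const_smul r⁻¹
    have h3 : HasFDerivAt (fun y : EuclideanSpace ℝ (Fin d) => φ (r⁻¹ • y))
        ((InnerProductSpace.toDual ℝ _ (gradient φ (r⁻¹ • x))).comp
          (r⁻¹ • ContinuousLinearMap.id ℝ (EuclideanSpace ℝ (Fin d)))) x := h1.comp x h2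
    have h4 : HasGradientAt (fun y : EuclideanSpace ℝ (Fin d) => φ (r⁻¹ • y))
        (r⁻¹ • gradient φ (r⁻¹ • x)) x := by
      rw [hasGradientAt_iff_hasFDerivAt]
      refine h3.congr_fderiv ?_
      ext u
      simp [real_inner_smul_left, real_inner_smul_right]
    exact h4.gradient
  have hηK : ∀ x : EuclideanSpace ℝ (Fin d),
      ‖gradient (fun y : EuclideanSpace ℝ (Fin d) => φ (r⁻¹ • y)) x‖ ≤ M / r := by
    intro x
    rw [hgradη x, norm_smul, norm_inv, Real.norm_eq_abs, abs_of_pos hr0]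
    calc r⁻¹ * ‖gradient φ (r⁻¹ • x)‖ ≤ r⁻¹ * M :=
          mul_le_mul_of_nonneg_left (hMle _) (inv_nonneg.2 hr0.le)
      _ = M / r := inv_mul_eq_div r M
  have key := cacc_main hp hΩ.1 hr0 (fun x => φ (r⁻¹ • x)) hηsm
    (fun x => (hφrange _).1) (fun x => (hφrange _).2) hηin hηout (M / r)
    (div_nonneg hM0 hr0.le) hηK v hv b
  have hC : C₀ / r = p * (M / r) := by rw [hC₀]; ring
  rw [hC]
  exact key
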